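/- (Composition–Diamond lemma, (ii) ⇔ (ii)'.) Let X be a well-ordered set, D(X) the free dialgebra over a field k with the deg-lex order, and S ⊆ D(X) a monic set. Then the following are equivalent: (ii) for every nonzero f ∈ Id(S), the leading term satisfies [f̄] = [a[s̄]b] for some s ∈ S and words a, b with [asb] a normal s-diword; (ii)' every nonzero f ∈ Id(S) has a representation f = α₁[a₁s₁b₁] + α₂[a₂s₂b₂] + ⋯ + αₙ[aₙsₙbₙ] where each [aᵢsᵢbᵢ] is a normal sᵢ-diword (sᵢ ∈ S) and the leading normal diwords are strictly decreasing: [a₁[s̄₁]b₁] > [a₂[s̄₂]b₂] > ⋯ > [aₙ[s̄ₙ]bₙ]. -/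

import Mathlib

universe u v

/-- A dialgebra over a field `k`: a `k`-vector space with two bilinear associative
products `lp` (written `⊢` in the paper) and `rp` (written `⊣`) satisfying the three
dialgebra axioms. -/
class Dialgebra (k : Type*) (D : Type*) [Field k] [AddCommGroup D] [Module k D] where
  lp : D → D → D
  rp : D → D → D
  lp_add_left : ∀ a b c : D, lp (a + b) c = lp a c + lp b c
  lp_add_right : ∀ a b c : D, lp a (b + c) = lp a b + lp a c
  lp_smul_left : ∀ (r : k) (a b : D), lp (r • a) b = r • lp a b
  lp_smul_right : ∀ (r : k) (a b : D), lp a (r • b) = r • lp a b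
  rp_add_left : ∀ a b c : D, rp (a + b) c = rp a c + rp b c
  rp_add_right : ∀ a b c : D, rp a (b + c) = rp a b + rp a c
  rp_smul_left : ∀ (r : k) (a b : D), rp (r • a) b = r • rp a b
  rp_smul_right : ∀ (r : k) (a b : D), rp a (r • b) = r • rp a b
  lp_assoc : ∀ a b c : D, lp (lp a b) c = lp a (lp b c)
  rp_assoc : ∀ a b c : D, rp (rp a b) c = rp a (rp b c)
  di1 : ∀ a b c : D, rp a (lp b c) = rp (rp a b) c
  di2 : ∀ a b c : D, lp (rp a b) c = lp a (lp b c)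
  di3 : ∀ a b c : D, lp a (rp b c) = rp (lp a b) c

/-- A Leibniz algebra over a field `k`: a `k`-vector space with a bilinear bracket
satisfying the Leibniz identity `[[a,b],c] = [[a,c],b] + [a,[b,c]]`. -/
class LeibnizAlgebra (k : Type*) (L : Type*) [Field k] [AddCommGroup L] [Module k L] where
  br : L → L → L
  br_add_left : ∀ a b c : L, br (a + b) c = br a c + br b c
  br_add_right : ∀ a b c : L, br a (b + c) = br a b + br a c
  br_smul_left : ∀ (r : k) (a b : L), br (r • a) b = r • br a b
  br_smul_right : ∀ (r : k) (a b : L), br a (r • b) = r • br a b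
  leibniz : ∀ a b c : L, br (br a b) c = br (br a c) b + br a (br b c)

/-- A normal diword over `X`: a nonempty word in `X` together with a marked letter
(its center), recorded as the letters to the left of the center, the center, and the
letters to the right of the center. -/
structure NDiword (X : Type*) where
  left : List X
  center : X
  right : List X

namespace NDiword

variable {X : Type*}

/-- The underlying (associative) word of a normal diword. -/
def word (u : NDiword X) : List X := u.left ++ u.center :: u.right

/-- Concatenation with center at the center of the second factor: the product `⊢`
on normal diwords. -/
def lconc (u v : NDiword X) : NDiword X := ⟨u.word ++ v.left, v.center, v.right⟩

/-- Concatenation with center at the center of the first factor: the product `⊣`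
on normal diwords. -/
def rconc (u v : NDiword X) : NDiword X := ⟨u.left, u.center, u.right ++ v.word⟩

/-- The deg-lex order on normal diwords: compare `wt([u]) = (n+m+1, m, x₋ₘ, …, xₙ)`
lexicographically. -/
def dlt [LinearOrder X] (u v : NDiword X) : Prop :=
  u.word.length < v.word.length ∨
    (u.word.length = v.word.length ∧
      (u.left.length < v.left.length ∨
        (u.left.length = v.left.length ∧ List.Lex (· < ·) u.word v.word)))

end NDiword

/-- The free dialgebra on `X` over `k`: the free `k`-vector space on the set of
normal diwords over `X`. -/
abbrev FreeDialg (k : Type*) [Field k] (X : Type*) := NDiword X →₀ k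

/-- The one-letter normal diword `ẋ`, as an element of the free dialgebra. -/
noncomputable def ofX (k : Type*) [Field k] {X : Type*} (x : X) : FreeDialg k X :=
  Finsupp.single ⟨[], x, []⟩ 1

section FreeDialgebra

variable {k : Type*} [Field k] {X : Type*}

/-- The product `⊢` on the free dialgebra, extended bilinearly from normal diwords. -/
noncomputable def lmul (f g : FreeDialg k X) : FreeDialg k X :=
  f.sum fun u a => g.sum fun v b => Finsupp.single (u.lconc v) (a * b)

/-- The product `⊣` on the free dialgebra, extended bilinearly from normal diwords. -/
noncomputable def rmul (f g : FreeDialg k X) : FreeDialg k X :=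
  f.sum fun u a => g.sum fun v b => Finsupp.single (u.rconc v) (a * b)

/-- `x₁ ⊢ (x₂ ⊢ (⋯ ⊢ t))` for a word `a = x₁x₂⋯` of letters. -/
noncomputable def lfold (a : List X) (t : FreeDialg k X) : FreeDialg k X :=
  a.foldr (fun x s => lmul (ofX k x) s) t

/-- `((t ⊣ x₁) ⊣ x₂) ⊣ ⋯` for a word `b = x₁x₂⋯` of letters. -/
noncomputable def rfold (t : FreeDialg k X) (b : List X) : FreeDialg k X :=
  b.foldl (fun s x => rmul s (ofX k x)) t

/-- `f` is left normed: every normal diword in its support has its center at the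
last letter. -/
def LeftNormed (f : FreeDialg k X) : Prop := ∀ u ∈ f.support, u.right = ([] : List X)

/-- `f` is right normed: every normal diword in its support has its center at the
first letter. -/
def RightNormed (f : FreeDialg k X) : Prop := ∀ u ∈ f.support, u.left = ([] : List X)

/-- `u` is the leading term (maximal term in the deg-lex order) of `f`. -/
def IsMaxTerm [LinearOrder X] (f : FreeDialg k X) (u : NDiword X) : Prop :=
  u ∈ f.support ∧ ∀ v ∈ f.support, v ≠ u → v.dlt u

/-- `f` is monic: its leading coefficient is `1`. -/
def Monic [LinearOrder X] (f : FreeDialg k X) : Prop :=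
  ∃ u, IsMaxTerm f u ∧ f u = 1

/-- A context for an `s`-diword `[asb]`: a normal diword with one letter `x_k`
removed, where `s` is to be substituted.  `center a b` is the case `k = 0` (so
`[asb] = a ⊢ ⋯ ⊢ s ⊣ ⋯ ⊣ b`); `left a w` is the case `k < 0` (so
`[asb] = a ⊢ ⋯ ⊢ s ⊢ [w]` with the center inside `w`); `right w b` is the case
`k > 0` (so `[asb] = [w] ⊣ s ⊣ ⋯ ⊣ b` with the center inside `w`). -/
inductive Ctx (X : Type*) where
  | center (a b : List X)
  | left (a : List X) (w : NDiword X)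
  | right (w : NDiword X) (b : List X)

/-- The `s`-diword `[asb]` determined by a context: substitute `s` into the context. -/
noncomputable def Ctx.eval (s : FreeDialg k X) : Ctx X → FreeDialg k X
  | Ctx.center a b => rfold (lfold a s) b
  | Ctx.left a w => lfold a (lmul s (Finsupp.single w 1))
  | Ctx.right w b => rfold (rmul (Finsupp.single w 1) s) b

/-- Substituting a normal diword `t` into a context gives a normal diword `[atb]`. -/
def Ctx.subst {X : Type*} (t : NDiword X) : Ctx X → NDiword X
  | Ctx.center a b => ⟨a ++ t.left, t.center, t.right ++ b⟩
  | Ctx.left a w => ⟨a ++ t.word ++ w.left, w.center, w.right⟩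
  | Ctx.right w b => ⟨w.left, w.center, w.right ++ t.word ++ b⟩

/-- `[asb]` is a normal `s`-diword: either `s` sits at the center (`k = 0`), or
`k < 0` and `s` is left normed, or `k > 0` and `s` is right normed. -/
def IsNormalFor (s : FreeDialg k X) : Ctx X → Prop
  | Ctx.center _ _ => True
  | Ctx.left _ _ => LeftNormed s
  | Ctx.right _ _ => RightNormed s

/-- Membership in the two-sided dialgebra ideal generated by `S`. -/
inductive IdealGen (S : Set (FreeDialg k X)) : FreeDialg k X → Prop
  | of {s : FreeDialg k X} : s ∈ S → IdealGen S s
  | zero : IdealGen S 0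
  | add {f g : FreeDialg k X} : IdealGen S f → IdealGen S g → IdealGen S (f + g)
  | smul (r : k) {f : FreeDialg k X} : IdealGen S f → IdealGen S (r • f)
  | lmul_left (g : FreeDialg k X) {f : FreeDialg k X} : IdealGen S f → IdealGen S (lmul g f)
  | lmul_right (g : FreeDialg k X) {f : FreeDialg k X} : IdealGen S f → IdealGen S (lmul f g)
  | rmul_left (g : FreeDialg k X) {f : FreeDialg k X} : IdealGen S f → IdealGen S (rmul g f)
  | rmul_right (g : FreeDialg k X) {f : FreeDialg k X} : IdealGen S f → IdealGen S (rmul f g)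

/-- The two-sided dialgebra ideal `Id(S)` generated by `S`, as a submodule. -/
def dialgIdeal (S : Set (FreeDialg k X)) : Submodule k (FreeDialg k X) where
  carrier := {f | IdealGen S f}
  add_mem' := fun hf hg => IdealGen.add hf hg
  zero_mem' := IdealGen.zero
  smul_mem' := fun r _ hf => IdealGen.smul r hf

end FreeDialgebra

section GSB

variable {k : Type*} [Field k] {X : Type*}

/-- `h` is a linear combination `Σᵢ αᵢ [aᵢsᵢbᵢ]` of `sᵢ`-diwords with `sᵢ ∈ S`, where
each pair `(sᵢ, [aᵢ⋅bᵢ])` satisfies the property `P`. -/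
def IsCombination (S : Set (FreeDialg k X)) (h : FreeDialg k X)
    (P : FreeDialg k X → Ctx X → Prop) : Prop :=
  ∃ (n : ℕ) (α : Fin n → k) (s : Fin n → FreeDialg k X) (c : Fin n → Ctx X),
    (∀ i, s i ∈ S) ∧ (∀ i, P (s i) (c i)) ∧
    h = ∑ i, α i • (c i).eval (s i)

/-- The composition of left multiplication `x ⊣ f` is trivial modulo `S`. -/
def TrivLMul [LinearOrder X] (S : Set (FreeDialg k X)) (x : X) (f : FreeDialg k X) : Prop :=
  IsCombination S (rmul (ofX k x) f) fun s c =>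
    IsNormalFor s c ∧ RightNormed s ∧ RightNormed (c.eval s) ∧
      ∀ u m, IsMaxTerm s u → IsMaxTerm (rmul (ofX k x) f) m →
        (c.subst u).word.length ≤ m.word.length

/-- The composition of right multiplication `f ⊢ x` is trivial modulo `S`. -/
def TrivRMul [LinearOrder X] (S : Set (FreeDialg k X)) (x : X) (f : FreeDialg k X) : Prop :=
  IsCombination S (lmul f (ofX k x)) fun s c =>
    IsNormalFor s c ∧ LeftNormed s ∧ LeftNormed (c.eval s) ∧
      ∀ u m, IsMaxTerm s u → IsMaxTerm (lmul f (ofX k x)) m →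
        (c.subst u).word.length ≤ m.word.length

/-- All compositions of left multiplication in `S` are trivial modulo `S`. -/
def LMulCompsTrivial [LinearOrder X] (S : Set (FreeDialg k X)) : Prop :=
  ∀ f ∈ S, ¬ RightNormed f → ∀ x : X, TrivLMul S x f

/-- All compositions of right multiplication in `S` are trivial modulo `S`. -/
def RMulCompsTrivial [LinearOrder X] (S : Set (FreeDialg k X)) : Prop :=
  ∀ f ∈ S, ¬ LeftNormed f → ∀ x : X, TrivRMul S x f

/-- `h` is trivial modulo `(S, [w])`: it is a combination of normal `S`-diwords with
leading normal diwords `< [w]`; moreover all the summands are right (resp. left)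
normed `S`-diwords whenever the side condition `rn` (resp. `ln`) holds. -/
def TrivBelowWith [LinearOrder X] (S : Set (FreeDialg k X)) (h : FreeDialg k X)
    (w : NDiword X) (rn ln : Prop) : Prop :=
  IsCombination S h fun s c =>
    IsNormalFor s c ∧ (∀ u, IsMaxTerm s u → (c.subst u).dlt w) ∧
      (rn → RightNormed s ∧ RightNormed (c.eval s)) ∧
      (ln → LeftNormed s ∧ LeftNormed (c.eval s))

/-- All compositions of inclusion among elements of `S` are trivial. -/
def InclCompsTrivial [LinearOrder X] (S : Set (FreeDialg k X)) : Prop :=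
  ∀ f ∈ S, ∀ g ∈ S, ∀ (fb gb : NDiword X) (c : Ctx X),
    IsMaxTerm f fb → IsMaxTerm g gb → IsNormalFor g c → fb = c.subst gb →
      TrivBelowWith S (f - c.eval g) fb
        (RightNormed f ∧ RightNormed g ∧ RightNormed (c.eval g))
        (LeftNormed f ∧ LeftNormed g ∧ LeftNormed (c.eval g))

/-- A context with no letters before the substituted polynomial (shape `[fb]`). -/
def Ctx.noLeft {X : Type*} : Ctx X → Prop
  | Ctx.center a _ => a = []
  | Ctx.left a _ => a = []
  | Ctx.right _ _ => False

/-- A context with no letters after the substituted polynomial (shape `[ag]`). -/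
def Ctx.noRight {X : Type*} : Ctx X → Prop
  | Ctx.center _ b => b = []
  | Ctx.right _ b => b = []
  | Ctx.left _ _ => False

/-- All compositions of intersection among elements of `S` are trivial. -/
def IntersectCompsTrivial [LinearOrder X] (S : Set (FreeDialg k X)) : Prop :=
  ∀ f ∈ S, ∀ g ∈ S, ∀ (fb gb : NDiword X) (cf cg : Ctx X),
    IsMaxTerm f fb → IsMaxTerm g gb → IsNormalFor f cf → IsNormalFor g cg →
    cf.noLeft → cg.noRight → cf.subst fb = cg.subst gb →
    (cf.subst fb).word.length < fb.word.length + gb.word.length →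
      TrivBelowWith S (cf.eval f - cg.eval g) (cf.subst fb)
        (RightNormed f ∧ RightNormed g ∧ RightNormed (cf.eval f) ∧ RightNormed (cg.eval g))
        (LeftNormed f ∧ LeftNormed g ∧ LeftNormed (cf.eval f) ∧ LeftNormed (cg.eval g))

/-- `S` is a Gröbner–Shirshov basis in the free dialgebra: `S` is monic and all
compositions (left multiplication, right multiplication, inclusion, intersection)
of elements of `S` are trivial. -/
def IsGSB [LinearOrder X] (S : Set (FreeDialg k X)) : Prop :=
  (∀ f ∈ S, Monic f) ∧ LMulCompsTrivial S ∧ RMulCompsTrivial S ∧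
    InclCompsTrivial S ∧ IntersectCompsTrivial S

/-- `Irr(S)`: the normal diwords that are not of the form `[a[s̄]b]` for any `s ∈ S`
and normal `s`-diword `[asb]`. -/
def IrrSet [LinearOrder X] (S : Set (FreeDialg k X)) : Set (NDiword X) :=
  {u | ¬ ∃ s ∈ S, ∃ (c : Ctx X) (sb : NDiword X),
    IsMaxTerm s sb ∧ IsNormalFor s c ∧ u = c.subst sb}

end GSB

/-! The deg-lex order is a well-order on normal diwords, and for a normal `s`-diword `[asb]`
the substitution `u ↦ [aub]` is strictly monotone on the support of `s`; hence the leading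
term of `[asb]` is `[a s̄ b]`, with the leading coefficient of `s`. Given (ii), subtracting the
right multiple of such an `[asb]` from `f ∈ Id(S)` cancels its leading term and leaves an
element of `Id(S)` with a smaller leading term, so well-founded induction yields (ii)'.
Conversely, in a sum with strictly decreasing leading diwords, the leading diword of the first
summand with nonzero coefficient is reached by no other summand, so it is the leading term. -/

theorem List.Lex.append_of_length_eq {α : Type*} {r : α → α → Prop} {l₁ l₂ : List α}
    (h : List.Lex r l₁ l₂) (hlen : l₁.length = l₂.length) (b₁ b₂ : List α) :
    List.Lex r (l₁ ++ b₁) (l₂ ++ b₂) := by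
  induction h with
  | nil => simp at hlen
  | rel hab => exact .rel hab
  | cons _ ih => exact .cons (ih (by simpa using hlen))

namespace NDiword

variable {X : Type*}

theorem ext_of_word {u v : NDiword X} (hl : u.left.length = v.left.length)
    (hw : u.word = v.word) : u = v := by
  obtain ⟨l, c, r⟩ := u
  obtain ⟨l', c', r'⟩ := v
  obtain ⟨rfl, h⟩ := List.append_inj hw hl
  cases h
  rfl

def weight (u : NDiword X) : ℕ ×ₗ ℕ ×ₗ List X :=
  toLex (u.word.length, toLex (u.left.length, u.word))

theorem weight_injective : Function.Injective (weight (X := X)) := by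
  intro u v h
  simp only [weight, toLex_inj, Prod.mk.injEq] at h
  exact ext_of_word h.2.1 h.2.2

variable [LinearOrder X]

instance : LinearOrder (NDiword X) := LinearOrder.lift' weight weight_injective

theorem lt_iff_dlt {u v : NDiword X} : u < v ↔ u.dlt v := by
  change weight u < weight v ↔ _
  simp only [weight, Prod.Lex.toLex_lt_toLex, dlt]
  rfl

-- `List.Lex` is not well-founded, but `dlt` only compares words of equal length, where it
-- agrees with `List.Shortlex`.
instance [WellFoundedLT X] : WellFoundedLT (NDiword X) := by
  have hwf := InvImage.wf (fun u : NDiword X => (u.word.length, u.left.length, u.word))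
    (WellFounded.prod_lex wellFounded_lt
      (WellFounded.prod_lex wellFounded_lt (List.Shortlex.wf wellFounded_lt)))
  refine ⟨Subrelation.wf (fun {u v} h => ?_) hwf⟩
  simp only [InvImage, Prod.lex_def]
  obtain h | ⟨e, h | ⟨e', h⟩⟩ := lt_iff_dlt.mp h
  exacts [Or.inl h, Or.inr ⟨e, Or.inl h⟩, Or.inr ⟨e, Or.inr ⟨e', List.Shortlex.of_lex e h⟩⟩]

-- `hleft`: the center moves by the same amount from `u` to `u'` as from `v` to `v'`.
theorem lt_of_word_eq_append {u v u' v' : NDiword X} (a b : List X)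
    (hu : u'.word = a ++ u.word ++ b) (hv : v'.word = a ++ v.word ++ b)
    (hleft : u'.left.length + v.left.length = v'.left.length + u.left.length) (h : u < v) :
    u' < v' := by
  have hlu := congrArg List.length hu
  have hlv := congrArg List.length hv
  simp only [List.length_append] at hlu hlv
  rw [lt_iff_dlt] at h ⊢
  obtain h | ⟨e, h | ⟨e', h⟩⟩ := h
  · exact Or.inl (by omega)
  · exact Or.inr ⟨by omega, Or.inl (by omega)⟩
  · refine Or.inr ⟨by omega, Or.inr ⟨by omega, ?_⟩⟩
    rw [hu, hv, List.append_assoc, List.append_assoc]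
    exact List.Lex.append_left _ (h.append_of_length_eq e b b) a

end NDiword

section LeadingTerm

variable {k : Type*} [Field k] {X : Type*} [LinearOrder X] {f : FreeDialg k X} {u v : NDiword X}

theorem isMaxTerm_iff_le : IsMaxTerm f u ↔ u ∈ f.support ∧ ∀ v ∈ f.support, v ≤ u := by
  refine and_congr_right fun _ => forall₂_congr fun v _ => ?_
  rw [le_iff_lt_or_eq, NDiword.lt_iff_dlt, or_iff_not_imp_right]

theorem IsMaxTerm.le (h : IsMaxTerm f u) (hv : v ∈ f.support) : v ≤ u :=
  (isMaxTerm_iff_le.mp h).2 v hv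

theorem IsMaxTerm.apply_eq_zero_of_lt (h : IsMaxTerm f u) (hv : u < v) : f v = 0 :=
  Finsupp.notMem_support_iff.mp fun hm => (h.le hm).not_gt hv

theorem isMaxTerm_iff_max_eq : IsMaxTerm f u ↔ f.support.max = u := by
  rw [isMaxTerm_iff_le]
  refine ⟨fun ⟨hu, hmax⟩ => le_antisymm ?_ (Finset.le_max hu),
    fun h => ⟨Finset.mem_of_max h, fun v hv => Finset.le_max_of_eq hv h⟩⟩
  exact Finset.max_le fun v hv => WithBot.coe_le_coe.mpr (hmax v hv)

theorem IsMaxTerm.unique (hu : IsMaxTerm f u) (hv : IsMaxTerm f v) : u = v :=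
  WithBot.coe_injective <|
    (isMaxTerm_iff_max_eq.mp hu).symm.trans (isMaxTerm_iff_max_eq.mp hv)

theorem exists_isMaxTerm (hf : f ≠ 0) : ∃ u, IsMaxTerm f u := by
  obtain ⟨u, hu⟩ := Finset.max_of_nonempty (Finsupp.support_nonempty_iff.mpr hf)
  exact ⟨u, isMaxTerm_iff_max_eq.mpr hu⟩

theorem Monic.apply_eq_one (hf : Monic f) (hu : IsMaxTerm f u) : f u = 1 := by
  obtain ⟨v, hv, hv1⟩ := hf
  rwa [hu.unique hv]

theorem IsMaxTerm.mapDomain {g : NDiword X → NDiword X} (hg : StrictMonoOn g f.support)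
    (hu : IsMaxTerm f u) : IsMaxTerm (f.mapDomain g) (g u) := by
  classical
  refine isMaxTerm_iff_le.mpr ⟨?_, fun v hv => ?_⟩
  · rw [Finsupp.mem_support_iff, Finsupp.mapDomain_apply' _ _ subset_rfl hg.injOn hu.1]
    exact Finsupp.mem_support_iff.mp hu.1
  · rw [Finsupp.mapDomain_support_of_injOn f hg.injOn] at hv
    obtain ⟨w, hw, rfl⟩ := Finset.mem_image.mp hv
    exact hg.monotoneOn hw hu.1 (hu.le hw)

theorem max_support_sub_smul_lt {e : FreeDialg k X} (hf : IsMaxTerm f u) (he : IsMaxTerm e u)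
    (he1 : e u = 1) : (f - f u • e).support.max < u := by
  rw [Finset.max_eq_sup_coe, Finset.sup_lt_iff (WithBot.bot_lt_coe u)]
  intro v hv
  have hvu : v ≠ u := by
    rintro rfl
    simp [he1] at hv
  obtain hv | hv := Finset.mem_union.mp (Finsupp.support_sub hv)
  · exact WithBot.coe_lt_coe.mpr ((hf.le hv).lt_of_ne hvu)
  · exact WithBot.coe_lt_coe.mpr ((he.le (Finsupp.support_smul hv)).lt_of_ne hvu)

end LeadingTerm

section Contexts

variable {k : Type*} [Field k] {X : Type*}

theorem lmul_ofX (x : X) (f : FreeDialg k X) :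
    lmul (ofX k x) f = f.mapDomain fun u => ⟨x :: u.left, u.center, u.right⟩ := by
  rw [lmul, ofX, Finsupp.mapDomain, Finsupp.sum_single_index (by simp)]
  exact Finsupp.sum_congr fun v _ => by simp [NDiword.lconc, NDiword.word]

theorem rmul_ofX (x : X) (f : FreeDialg k X) :
    rmul f (ofX k x) = f.mapDomain fun u => ⟨u.left, u.center, u.right ++ [x]⟩ := by
  rw [rmul, ofX, Finsupp.mapDomain]
  refine Finsupp.sum_congr fun u _ => ?_
  rw [Finsupp.sum_single_index (by simp)]
  simp [NDiword.rconc, NDiword.word]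

theorem lmul_single_one (w : NDiword X) (f : FreeDialg k X) :
    lmul f (Finsupp.single w 1) = f.mapDomain (·.lconc w) := by
  rw [lmul, Finsupp.mapDomain]
  refine Finsupp.sum_congr fun u _ => ?_
  rw [Finsupp.sum_single_index (by simp), mul_one]

theorem single_one_rmul (w : NDiword X) (f : FreeDialg k X) :
    rmul (Finsupp.single w 1) f = f.mapDomain w.rconc := by
  rw [rmul, Finsupp.sum_single_index (by simp), Finsupp.mapDomain]
  exact Finsupp.sum_congr fun v _ => by rw [one_mul]

theorem lfold_eq_mapDomain (a : List X) (f : FreeDialg k X) :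
    lfold a f = f.mapDomain fun u => ⟨a ++ u.left, u.center, u.right⟩ := by
  induction a with
  | nil => exact Finsupp.mapDomain_id.symm
  | cons x a ih =>
    change lmul (ofX k x) (lfold a f) = _
    rw [ih, lmul_ofX, ← Finsupp.mapDomain_comp]
    rfl

theorem rfold_eq_mapDomain (b : List X) (f : FreeDialg k X) :
    rfold f b = f.mapDomain fun u => ⟨u.left, u.center, u.right ++ b⟩ := by
  induction b generalizing f with
  | nil =>
    simp only [List.append_nil]
    exact Finsupp.mapDomain_id.symm
  | cons x b ih =>
    change rfold (rmul f (ofX k x)) b = _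
    rw [ih, rmul_ofX, ← Finsupp.mapDomain_comp]
    simp [Function.comp_def]

theorem Ctx.eval_eq_mapDomain (c : Ctx X) (s : FreeDialg k X) :
    c.eval s = s.mapDomain c.subst := by
  cases c with
  | center a b =>
    rw [Ctx.eval, lfold_eq_mapDomain, rfold_eq_mapDomain, ← Finsupp.mapDomain_comp]
    rfl
  | left a w =>
    rw [Ctx.eval, lmul_single_one, lfold_eq_mapDomain, ← Finsupp.mapDomain_comp]
    simp [Function.comp_def, Ctx.subst, NDiword.lconc]
  | right w b =>
    rw [Ctx.eval, single_one_rmul, rfold_eq_mapDomain, ← Finsupp.mapDomain_comp]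
    simp [Function.comp_def, Ctx.subst, NDiword.rconc]

theorem Ctx.eval_mem_dialgIdeal {S : Set (FreeDialg k X)} {s : FreeDialg k X} (c : Ctx X)
    (hs : s ∈ S) : c.eval s ∈ dialgIdeal S := by
  have lfold_mem (a : List X) {f} (hf : IdealGen S f) : IdealGen S (lfold a f) := by
    induction a with
    | nil => exact hf
    | cons x a ih => exact .lmul_left (ofX k x) ih
  have rfold_mem (b : List X) {f} (hf : IdealGen S f) : IdealGen S (rfold f b) := by
    induction b generalizing f with
    | nil => exact hf
    | cons x b ih => exact ih (.rmul_right (ofX k x) hf)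
  cases c with
  | center a b => exact rfold_mem b (lfold_mem a (.of hs))
  | left a w => exact lfold_mem a (.lmul_right _ (.of hs))
  | right w b => exact rfold_mem b (.rmul_left _ (.of hs))

end Contexts

section NormalSDiwords

variable {k : Type*} [Field k] {X : Type*} [LinearOrder X] {s : FreeDialg k X} {c : Ctx X}
  {u : NDiword X}

theorem Ctx.strictMonoOn_subst (hn : IsNormalFor s c) : StrictMonoOn c.subst s.support := by
  intro u hu v hv h
  cases c with
  | center a b =>
    refine NDiword.lt_of_word_eq_append a b ?_ ?_ ?_ h <;> simp [Ctx.subst, NDiword.word]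
    omega
  | left a w =>
    have hu' : u.right = [] := hn u hu
    have hv' : v.right = [] := hn v hv
    refine NDiword.lt_of_word_eq_append a w.word ?_ ?_ ?_ h <;>
      simp [Ctx.subst, NDiword.word, hu', hv']
    omega
  | right w b =>
    have hu' : u.left = [] := hn u hu
    have hv' : v.left = [] := hn v hv
    refine NDiword.lt_of_word_eq_append w.word b ?_ ?_ ?_ h <;>
      simp [Ctx.subst, NDiword.word, hu', hv']

theorem Ctx.eval_apply_subst (hn : IsNormalFor s c) (hu : u ∈ s.support) :
    c.eval s (c.subst u) = s u := by
  rw [c.eval_eq_mapDomain]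
  exact Finsupp.mapDomain_apply' _ _ subset_rfl (Ctx.strictMonoOn_subst hn).injOn hu

theorem IsMaxTerm.eval (hn : IsNormalFor s c) (hu : IsMaxTerm s u) :
    IsMaxTerm (c.eval s) (c.subst u) := by
  rw [c.eval_eq_mapDomain]
  exact hu.mapDomain (Ctx.strictMonoOn_subst hn)

end NormalSDiwords

theorem exists_isMaxTerm_sum_of_strictAnti {k : Type*} [Field k] {X : Type*} [LinearOrder X]
    {n : ℕ} {e : Fin n → FreeDialg k X} {w : Fin n → NDiword X} (α : Fin n → k)
    (he : ∀ i, IsMaxTerm (e i) (w i)) (hw : StrictAnti w) (hf : ∑ i, α i • e i ≠ 0) :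
    ∃ i, IsMaxTerm (∑ i, α i • e i) (w i) := by
  classical
  obtain ⟨i, -, hi⟩ := Finset.exists_ne_zero_of_sum_ne_zero hf
  obtain ⟨i₀, hi₀, hmin⟩ := Finset.exists_min_image (Finset.univ.filter (α · ≠ 0)) id
    ⟨i, by simpa using left_ne_zero_of_smul hi⟩
  have hα₀ : α i₀ ≠ 0 := (Finset.mem_filter.mp hi₀).2
  have hw_le {j : Fin n} (hj : α j ≠ 0) : w j ≤ w i₀ := hw.antitone (hmin j (by simpa using hj))
  have hvanish (j : Fin n) (v : NDiword X) (hv : w j < v) : (α j • e j) v = 0 := by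
    rw [Finsupp.smul_apply, (he j).apply_eq_zero_of_lt hv, smul_zero]
  have hcoeff : (∑ j, α j • e j) (w i₀) = α i₀ * e i₀ (w i₀) := by
    rw [Finsupp.finsetSum_apply, Finset.sum_eq_single i₀ (fun j _ hj => ?_) (by simp)]
    · rfl
    by_cases hαj : α j = 0
    · simp [hαj]
    · exact hvanish j _ ((hw_le hαj).lt_of_ne (hw.injective.ne hj))
  refine ⟨i₀, isMaxTerm_iff_le.mpr ⟨?_, fun v hv => not_lt.mp fun hlt => ?_⟩⟩
  · rw [Finsupp.mem_support_iff, hcoeff]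
    exact mul_ne_zero hα₀ (Finsupp.mem_support_iff.mp (he i₀).1)
  · refine Finsupp.mem_support_iff.mp hv ?_
    rw [Finsupp.finsetSum_apply]
    refine Finset.sum_eq_zero fun j _ => ?_
    by_cases hαj : α j = 0
    · simp [hαj]
    · exact hvanish j v ((hw_le hαj).trans_lt hlt)

-- A summand `α[asb]` of (ii)': `coeff = α`, `gen = s`, `ctx = [a·b]`, `genLead = s̄`.
structure ScaledSDiword (k : Type*) [Field k] (X : Type*) where
  coeff : k
  gen : FreeDialg k X
  ctx : Ctx X
  genLead : NDiword X

namespace ScaledSDiword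

variable {k : Type*} [Field k] {X : Type*}

noncomputable def toFreeDialg (t : ScaledSDiword k X) : FreeDialg k X :=
  t.coeff • t.ctx.eval t.gen

def lead (t : ScaledSDiword k X) : NDiword X := t.ctx.subst t.genLead

def IsNormalIn [LinearOrder X] (S : Set (FreeDialg k X)) (t : ScaledSDiword k X) : Prop :=
  t.gen ∈ S ∧ IsNormalFor t.gen t.ctx ∧ IsMaxTerm t.gen t.genLead

end ScaledSDiword

theorem exists_decreasing_normal_sum {k X : Type*} [Field k] [LinearOrder X]
    [WellFoundedLT X] {S : Set (FreeDialg k X)} (hmonic : ∀ s ∈ S, Monic s)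
    (hlead : ∀ f ∈ dialgIdeal S, f ≠ 0 → ∀ fb : NDiword X, IsMaxTerm f fb →
      ∃ s ∈ S, ∃ (c : Ctx X) (sb : NDiword X), IsNormalFor s c ∧ IsMaxTerm s sb ∧ fb = c.subst sb)
    {f : FreeDialg k X} (hf : f ∈ dialgIdeal S) :
    ∃ l : List (ScaledSDiword k X), (∀ t ∈ l, t.IsNormalIn S) ∧
      l.Pairwise (fun t t' => t'.lead < t.lead) ∧ (∀ t ∈ l, ↑t.lead ≤ f.support.max) ∧
      f = (l.map ScaledSDiword.toFreeDialg).sum := by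
  induction hm : f.support.max using WellFoundedLT.induction generalizing f with
  | _ m ih =>
  subst hm
  rcases eq_or_ne f 0 with rfl | hf0
  · exact ⟨[], by simp⟩
  obtain ⟨fb, hfb⟩ := exists_isMaxTerm hf0
  obtain ⟨s, hs, c, sb, hn, hsb, rfl⟩ := hlead f hf hf0 fb hfb
  set t : ScaledSDiword k X := ⟨f (c.subst sb), s, c, sb⟩
  have hlt : (f - t.toFreeDialg).support.max < c.subst sb :=
    max_support_sub_smul_lt hfb (hsb.eval hn)
      ((c.eval_apply_subst hn hsb.1).trans ((hmonic s hs).apply_eq_one hsb))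
  have hmem : f - t.toFreeDialg ∈ dialgIdeal S :=
    sub_mem hf (Submodule.smul_mem _ _ (c.eval_mem_dialgIdeal hs))
  obtain ⟨l, hnorm, hdec, hbound, hsum⟩ :=
    ih _ (isMaxTerm_iff_max_eq.mp hfb ▸ hlt) hmem rfl
  have hl : ∀ t' ∈ l, t'.lead < t.lead :=
    fun t' ht' => WithBot.coe_lt_coe.mp ((hbound t' ht').trans_lt hlt)
  refine ⟨t :: l, ?_, List.pairwise_cons.mpr ⟨hl, hdec⟩, ?_, ?_⟩
  · exact List.forall_mem_cons.mpr ⟨⟨hs, hn, hsb⟩, hnorm⟩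
  · rw [isMaxTerm_iff_max_eq.mp hfb]
    exact List.forall_mem_cons.mpr ⟨le_rfl, fun t' ht' => WithBot.coe_le_coe.mpr (hl t' ht').le⟩
  · rw [List.map_cons, List.sum_cons, ← hsum, add_sub_cancel]

/-- Composition–Diamond lemma, (ii) ⇔ (ii)': for a monic set `S`,
the leading term of every nonzero `f ∈ Id(S)` is of the form `[a[s̄]b]` if and only
if every nonzero `f ∈ Id(S)` is a linear combination of normal `S`-diwords with
strictly decreasing leading normal diwords. -/
theorem cd_lemma_ii_iff_ii' {k X : Type*} [Field k] [LinearOrder X]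
    [WellFoundedLT X] (S : Set (FreeDialg k X)) (hmonic : ∀ f ∈ S, Monic f) :
    (∀ f ∈ dialgIdeal S, f ≠ 0 → ∀ fb : NDiword X, IsMaxTerm f fb →
        ∃ s ∈ S, ∃ (c : Ctx X) (sb : NDiword X),
          IsNormalFor s c ∧ IsMaxTerm s sb ∧ fb = c.subst sb)
    ↔ (∀ f ∈ dialgIdeal S, f ≠ 0 →
        ∃ (n : ℕ) (α : Fin n → k) (s : Fin n → FreeDialg k X) (c : Fin n → Ctx X)
          (sb : Fin n → NDiword X),
          (∀ i, s i ∈ S) ∧ (∀ i, IsNormalFor (s i) (c i)) ∧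
          (∀ i, IsMaxTerm (s i) (sb i)) ∧
          (∀ i j : Fin n, i < j → ((c j).subst (sb j)).dlt ((c i).subst (sb i))) ∧
          f = ∑ i, α i • (c i).eval (s i)) := by
  constructor
  · intro hlead f hf _
    obtain ⟨l, hnorm, hdec, -, rfl⟩ := exists_decreasing_normal_sum hmonic hlead hf
    have hget (i : Fin l.length) := hnorm _ (l.get_mem i)
    refine ⟨l.length, fun i => (l.get i).coeff, fun i => (l.get i).gen, fun i => (l.get i).ctx,
      fun i => (l.get i).genLead, fun i => (hget i).1, fun i => (hget i).2.1,
      fun i => (hget i).2.2, fun i j hij => NDiword.lt_iff_dlt.mp (hdec.rel_get_of_lt hij), ?_⟩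
    exact (Fin.sum_univ_fun_getElem l ScaledSDiword.toFreeDialg).symm
  · intro hdec f hf hf0 fb hfb
    obtain ⟨n, α, s, c, sb, hS, hn, hsb, hlt, rfl⟩ := hdec f hf hf0
    obtain ⟨i, hi⟩ := exists_isMaxTerm_sum_of_strictAnti α (fun i => (hsb i).eval (hn i))
      (fun i j hij => NDiword.lt_iff_dlt.mpr (hlt i j hij)) hf0
    exact ⟨s i, hS i, c i, sb i, hn i, hsb i, hfb.unique hi⟩
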